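/- Let 0 ≤ R₁ < R₂, let a, b be reals with b > 0, and define C(a,b) = Q(a) + exp((2-2ab)/b²)·Q((2-ab)/b). If R is a random variable on [R₁,R₂] with density f(r) = 2r/(R₂² - R₁²), then E[1 - Q(a + b·ln(R/R_c))] = 1 - (1/(R₂² - R₁²))·[R₂²·C(a₂, b) - R₁²·C(a₁, b)], where a₂ = a + b·ln(R₂/R_c) and a₁ = a + b·ln(R₁/R_c), for any R_c > 0. -/

import Mathlib

open MeasureTheory

/-- The Gaussian tail function `Q(x) = (1/√(2π)) ∫_x^∞ e^{-t²/2} dt`. -/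
noncomputable def gaussQ (x : ℝ) : ℝ :=
  (1 / Real.sqrt (2 * Real.pi)) * ∫ t in Set.Ioi x, Real.exp (-t ^ 2 / 2)

/-- `C(a,b) = Q(a) + exp((2-2ab)/b²) Q((2-ab)/b)`. -/
noncomputable def gaussC (a b : ℝ) : ℝ :=
  gaussQ a + Real.exp ((2 - 2 * a * b) / b ^ 2) * gaussQ ((2 - a * b) / b)

/-!
`F(r) = r² C(a + b log(r/R_c), b)` is a primitive of `2r Q(a + b log(r/R_c))`: in
`∂C(α, b)/∂α` the two Gaussian-density terms cancel because `e^{(2-2αb)/b²} φ((2-αb)/b) = φ(α)`,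
leaving `-(2/b) e^{(2-2αb)/b²} Q((2-αb)/b)`, and with `dα/dr = b/r` the derivative of `r² C`
collapses to `2r Q(α)`. For `b > 0`, `F(r) → 0` as `r → 0⁺` (the tilted term of `r² C` equals
`R_c² e^{(2-2ab)/b²} Q(...)` with the argument of `Q` tending to `+∞`), so the fundamental theorem
of calculus applies on `[R₁, R₂]` even when `R₁ = 0`; integrability is automatic because the
derivative is nonnegative.
-/

open Real Set Filter Topology intervalIntegral

lemma exp_neg_sq_div_two_eq :
    (fun t : ℝ => exp (-t ^ 2 / 2)) = fun t => exp (-(1 / 2) * t ^ 2) := by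
  funext t; ring_nf

lemma integrable_exp_neg_sq_div_two : Integrable fun t : ℝ => exp (-t ^ 2 / 2) := by
  rw [exp_neg_sq_div_two_eq]; exact integrable_exp_neg_mul_sq one_half_pos

lemma integral_exp_neg_sq_div_two : ∫ t : ℝ, exp (-t ^ 2 / 2) = √(2 * π) := by
  rw [exp_neg_sq_div_two_eq, integral_gaussian]; ring_nf

lemma gaussQ_eq_sub_integral (x : ℝ) :
    gaussQ x = gaussQ 0 - 1 / √(2 * π) * ∫ t in 0..x, exp (-t ^ 2 / 2) := by
  rw [gaussQ, gaussQ, ← integral_Ioi_sub_Ioi' integrable_exp_neg_sq_div_two.integrableOn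
    integrable_exp_neg_sq_div_two.integrableOn]
  ring

lemma hasDerivAt_gaussQ (x : ℝ) :
    HasDerivAt gaussQ (-(1 / √(2 * π) * exp (-x ^ 2 / 2))) x := by
  have hcont : Continuous fun t : ℝ => exp (-t ^ 2 / 2) := by fun_prop
  have hprim := integral_hasDerivAt_right integrable_exp_neg_sq_div_two.intervalIntegrable
    hcont.aestronglyMeasurable.stronglyMeasurableAtFilter hcont.continuousAt (a := 0) (b := x)
  exact ((hprim.const_mul (1 / √(2 * π))).const_sub (gaussQ 0)).congr_of_eventuallyEq
    (Eventually.of_forall gaussQ_eq_sub_integral)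

lemma gaussQ_nonneg (x : ℝ) : 0 ≤ gaussQ x :=
  mul_nonneg (by positivity) (setIntegral_nonneg measurableSet_Ioi fun t _ => (exp_pos _).le)

lemma gaussQ_le_one (x : ℝ) : gaussQ x ≤ 1 := by
  have hle : ∫ t in Ioi x, exp (-t ^ 2 / 2) ≤ √(2 * π) := by
    rw [← integral_exp_neg_sq_div_two]
    exact setIntegral_le_integral integrable_exp_neg_sq_div_two
      (Eventually.of_forall fun t => (exp_pos _).le)
  have hpos : 0 < √(2 * π) := by positivity
  calc gaussQ x ≤ 1 / √(2 * π) * √(2 * π) := by unfold gaussQ; gcongr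
    _ = 1 := by field_simp

lemma tendsto_gaussQ_atTop : Tendsto gaussQ atTop (𝓝 0) := by
  have hprim := intervalIntegral_tendsto_integral_Ioi 0
    integrable_exp_neg_sq_div_two.integrableOn tendsto_id
  have hlim := (hprim.const_mul (1 / √(2 * π))).const_sub (gaussQ 0)
  rw [gaussQ, sub_self] at hlim
  exact hlim.congr fun x => (gaussQ_eq_sub_integral x).symm

lemma hasDerivAt_gaussC {b : ℝ} (hb : b ≠ 0) (x : ℝ) :
    HasDerivAt (fun α => gaussC α b)
      (-(2 / b) * exp ((2 - 2 * x * b) / b ^ 2) * gaussQ ((2 - x * b) / b)) x := by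
  have hE : HasDerivAt (fun α : ℝ => exp ((2 - 2 * α * b) / b ^ 2))
      (exp ((2 - 2 * x * b) / b ^ 2) * -(2 / b)) x := by
    refine (((((hasDerivAt_id' x).const_mul 2).mul_const b).const_sub 2).div_const
      (b ^ 2)).exp.congr_deriv ?_
    field_simp
  have hv : HasDerivAt (fun α : ℝ => (2 - α * b) / b) (-1) x := by
    refine ((((hasDerivAt_id' x).mul_const b).const_sub 2).div_const b).congr_deriv ?_
    field_simp
  have hQv := (hasDerivAt_gaussQ ((2 - x * b) / b)).comp x hv
  simp only [Function.comp_def] at hQv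
  have htilt : exp ((2 - 2 * x * b) / b ^ 2) * exp (-((2 - x * b) / b) ^ 2 / 2) =
      exp (-x ^ 2 / 2) := by
    rw [← exp_add]; congr 1; field_simp; ring
  refine ((hasDerivAt_gaussQ x).add (hE.mul hQv)).congr_deriv ?_
  linear_combination (1 / √(2 * π)) * htilt

noncomputable def radialPrimitive (a b Rc r : ℝ) : ℝ :=
  r ^ 2 * gaussC (a + b * log (r / Rc)) b

lemma hasDerivAt_radialPrimitive (a : ℝ) {b Rc r : ℝ} (hb : b ≠ 0) (hRc : Rc ≠ 0) (hr : r ≠ 0) :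
    HasDerivAt (radialPrimitive a b Rc) (2 * r * gaussQ (a + b * log (r / Rc))) r := by
  have hα : HasDerivAt (fun s => a + b * log (s / Rc)) (b * (1 / Rc / (r / Rc))) r :=
    (((hasDerivAt_id' r).div_const Rc).log (div_ne_zero hr hRc)).const_mul b |>.const_add a
  refine ((hasDerivAt_pow 2 r).mul ((hasDerivAt_gaussC hb _).comp r hα)).congr_deriv ?_
  simp only [Function.comp_apply, gaussC]
  field_simp
  ring

lemma radialPrimitive_eq (a : ℝ) {b Rc r : ℝ} (hb : b ≠ 0) (hRc : 0 < Rc) (hr : 0 < r) :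
    radialPrimitive a b Rc r = r ^ 2 * gaussQ (a + b * log (r / Rc)) +
      Rc ^ 2 * exp ((2 - 2 * a * b) / b ^ 2) * gaussQ ((2 - a * b) / b - b * log (r / Rc)) := by
  have hexp : exp ((2 - 2 * (a + b * log (r / Rc)) * b) / b ^ 2) =
      exp ((2 - 2 * a * b) / b ^ 2) * (exp (log (r / Rc)))⁻¹ ^ 2 := by
    rw [← exp_neg, ← exp_nat_mul, ← exp_add]; congr 1; field_simp; ring
  rw [radialPrimitive, gaussC, hexp, exp_log (div_pos hr hRc)]
  field_simp
  ring_nf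

lemma tendsto_radialPrimitive_zero (a : ℝ) {b Rc : ℝ} (hb : 0 < b) (hRc : 0 < Rc) :
    Tendsto (radialPrimitive a b Rc) (𝓝[>] 0) (𝓝 0) := by
  have hsq : Tendsto (fun r : ℝ => r ^ 2) (𝓝[>] 0) (𝓝 0) := by
    simpa using ((continuous_pow 2).tendsto (0 : ℝ)).mono_left nhdsWithin_le_nhds
  have hlog : Tendsto (fun r => log (r / Rc)) (𝓝[>] 0) atBot :=
    tendsto_log_nhdsGT_zero.comp <| by
      simpa using ((continuous_id.div_const Rc).continuousWithinAt (x := 0)).tendsto_nhdsWithin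
        (s := Ioi 0) (t := Ioi 0) fun r hr => div_pos hr hRc
  have hQ : Tendsto (fun r => r ^ 2 * gaussQ (a + b * log (r / Rc))) (𝓝[>] 0) (𝓝 0) :=
    squeeze_zero (fun r => mul_nonneg (sq_nonneg r) (gaussQ_nonneg _))
      (fun r => mul_le_of_le_one_right (sq_nonneg r) (gaussQ_le_one _)) hsq
  have hQv : Tendsto (fun r => gaussQ ((2 - a * b) / b - b * log (r / Rc))) (𝓝[>] 0) (𝓝 0) :=
    tendsto_gaussQ_atTop.comp <| tendsto_atTop_add_const_left _ _ <|
      tendsto_neg_atBot_atTop.comp (hlog.const_mul_atBot hb) |>.congr fun r => by simp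
  have hlim := hQ.add (hQv.const_mul (Rc ^ 2 * exp ((2 - 2 * a * b) / b ^ 2)))
  rw [mul_zero, add_zero] at hlim
  refine hlim.congr' ?_
  filter_upwards [self_mem_nhdsWithin] with r (hr : 0 < r)
  rw [radialPrimitive_eq a hb.ne' hRc hr]

lemma continuousOn_radialPrimitive (a : ℝ) {b Rc : ℝ} (hb : 0 < b) (hRc : 0 < Rc) :
    ContinuousOn (radialPrimitive a b Rc) (Ici 0) := by
  rintro r (hr : 0 ≤ r)
  rcases hr.eq_or_lt with rfl | hr
  · refine continuousWithinAt_Ioi_iff_Ici.1 ?_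
    simpa [ContinuousWithinAt, radialPrimitive] using tendsto_radialPrimitive_zero a hb hRc
  · exact (hasDerivAt_radialPrimitive a hb.ne' hRc.ne' hr.ne').continuousAt.continuousWithinAt

lemma intervalIntegrable_two_mul_gaussQ_log (a : ℝ) {b Rc R₁ R₂ : ℝ} (hb : 0 < b)
    (hRc : 0 < Rc) (h₁ : 0 ≤ R₁) (h₁₂ : R₁ ≤ R₂) :
    IntervalIntegrable (fun r => 2 * r * gaussQ (a + b * log (r / Rc))) volume R₁ R₂ :=
  (intervalIntegrable_iff_integrableOn_Ioc_of_le h₁₂).2 <| integrableOn_deriv_of_nonneg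
    ((continuousOn_radialPrimitive a hb hRc).mono (Icc_subset_Ici_self.trans (Ici_subset_Ici.2 h₁)))
    (fun _ hr => hasDerivAt_radialPrimitive a hb.ne' hRc.ne' (h₁.trans_lt hr.1).ne')
    (fun r hr => mul_nonneg (by linarith [hr.1]) (gaussQ_nonneg _))

lemma integral_two_mul_gaussQ_log (a : ℝ) {b Rc R₁ R₂ : ℝ} (hb : 0 < b)
    (hRc : 0 < Rc) (h₁ : 0 ≤ R₁) (h₁₂ : R₁ ≤ R₂) :
    ∫ r in R₁..R₂, 2 * r * gaussQ (a + b * log (r / Rc)) =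
      radialPrimitive a b Rc R₂ - radialPrimitive a b Rc R₁ :=
  integral_eq_sub_of_hasDerivAt_of_le h₁₂
    ((continuousOn_radialPrimitive a hb hRc).mono (Icc_subset_Ici_self.trans (Ici_subset_Ici.2 h₁)))
    (fun _ hr => hasDerivAt_radialPrimitive a hb.ne' hRc.ne' (h₁.trans_lt hr.1).ne')
    (intervalIntegrable_two_mul_gaussQ_log a hb hRc h₁ h₁₂)

/-- Lemma 1: the spatially averaged SIR outage probability over an annulus with inner
radius `R₁` and outer radius `R₂`, for a user at area-uniform random distance `R`. -/
theorem stmt_5 (R₁ R₂ Rc a b : ℝ) (h₁ : 0 ≤ R₁) (h₁₂ : R₁ < R₂) (hb : 0 < b)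
    (hRc : 0 < Rc) :
    ∫ r in R₁..R₂,
        (1 - gaussQ (a + b * Real.log (r / Rc))) * (2 * r / (R₂ ^ 2 - R₁ ^ 2)) =
      1 - (1 / (R₂ ^ 2 - R₁ ^ 2)) *
        (R₂ ^ 2 * gaussC (a + b * Real.log (R₂ / Rc)) b -
          R₁ ^ 2 * gaussC (a + b * Real.log (R₁ / Rc)) b) := by
  have hD : R₂ ^ 2 - R₁ ^ 2 ≠ 0 := by nlinarith
  have hQ := intervalIntegrable_two_mul_gaussQ_log a hb hRc h₁ h₁₂.le
  have hr : IntervalIntegrable (fun r : ℝ => 2 * r) volume R₁ R₂ :=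
    (continuous_const_mul 2).intervalIntegrable _ _
  calc ∫ r in R₁..R₂, (1 - gaussQ (a + b * log (r / Rc))) * (2 * r / (R₂ ^ 2 - R₁ ^ 2))
      = (∫ r in R₁..R₂, (2 * r - 2 * r * gaussQ (a + b * log (r / Rc)))) / (R₂ ^ 2 - R₁ ^ 2) := by
        rw [← intervalIntegral.integral_div]; congr 1; ext r; ring
    _ = ((R₂ ^ 2 - R₁ ^ 2) - (radialPrimitive a b Rc R₂ - radialPrimitive a b Rc R₁)) /
          (R₂ ^ 2 - R₁ ^ 2) := by
        rw [integral_sub hr hQ, integral_two_mul_gaussQ_log a hb hRc h₁ h₁₂.le,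
          intervalIntegral.integral_const_mul, integral_id]
        ring
    _ = _ := by rw [radialPrimitive, radialPrimitive]; field_simp
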